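/- Let A be a d x d real matrix with ||A - I||_op < 1. Then Tr(A - I) - log(det A) <= ||A - I||_F^2 / (2 (1 - ||A - I||_op)). In particular det A > 0. -/

import Mathlib

open Matrix

/-- The ℓ²→ℓ² operator (spectral) norm of a real square matrix. -/
noncomputable def matOpNorm {d : ℕ} (A : Matrix (Fin d) (Fin d) ℝ) : ℝ :=
  ‖(Matrix.toEuclideanCLM (𝕜 := ℝ) A : EuclideanSpace ℝ (Fin d) →L[ℝ] EuclideanSpace ℝ (Fin d))‖

/-- The Frobenius norm of a real square matrix. -/
noncomputable def matFrobNorm {d : ℕ} (A : Matrix (Fin d) (Fin d) ℝ) : ℝ :=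
  Real.sqrt (∑ i, ∑ j, (A i j) ^ 2)

/-!
With `B = A - 1`, the matrices `1 + t B`, `t ∈ [0, 1]`, are invertible by the Neumann series, so
`det (1 + t B)` never vanishes on `[0, 1]` and `det A > 0` by continuity. By Jacobi's formula
`φ t = log det (1 + t B) - t Tr B` has `φ' t = -t Tr ((1 + t B)⁻¹ B B)`, and
`Tr (C B B) ≤ ‖C‖_op ‖B‖_F²` with `‖(1 + t B)⁻¹‖_op ≤ (1 - ‖B‖_op)⁻¹` gives
`φ' t ≥ -t ‖B‖_F² / (1 - ‖B‖_op)`; integrate over `[0, 1]`.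
-/

open Set
open scoped Matrix.Norms.L2Operator

theorem norm_smul_le_of_mem_Icc {E : Type*} [SeminormedAddCommGroup E] [NormedSpace ℝ E]
    {t : ℝ} (ht : t ∈ Icc (0 : ℝ) 1) (x : E) : ‖t • x‖ ≤ ‖x‖ := by
  rw [norm_smul, Real.norm_of_nonneg ht.1]
  exact mul_le_of_le_one_left (norm_nonneg x) ht.2

theorem norm_inverse_one_sub_le {R : Type*} [NormedRing R] [HasSummableGeomSeries R]
    (h₁ : ‖(1 : R)‖ ≤ 1) {x : R} (hx : ‖x‖ < 1) :
    ‖Ring.inverse (1 - x)‖ ≤ (1 - ‖x‖)⁻¹ := by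
  rw [← geom_series_eq_inverse x hx]
  linarith [tsum_geometric_le_of_norm_lt_one x hx]

theorem pos_of_continuousOn_Icc_ne_zero {f : ℝ → ℝ} (hf : ContinuousOn f (Icc 0 1))
    (hne : ∀ t ∈ Icc (0 : ℝ) 1, f t ≠ 0) (h₀ : 0 < f 0) : 0 < f 1 := by
  by_contra! h₁
  obtain ⟨t, ht, hft⟩ := intermediate_value_Icc' zero_le_one hf ⟨h₁, h₀.le⟩
  exact hne t ht hft

theorem sub_div_two_le_of_hasDerivAt_ge_neg_mul {f f' : ℝ → ℝ} {K : ℝ}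
    (hf : ContinuousOn f (Icc 0 1)) (hf' : ∀ t ∈ Ioo (0 : ℝ) 1, HasDerivAt f (f' t) t)
    (hbound : ∀ t ∈ Ioo (0 : ℝ) 1, -(K * t) ≤ f' t) :
    f 0 - K / 2 ≤ f 1 := by
  have hmono : MonotoneOn (fun t => f t + K * t ^ 2 / 2) (Icc 0 1) := by
    refine monotoneOn_of_hasDerivWithinAt_nonneg (f' := fun t => f' t + K * t) (convex_Icc 0 1)
      (hf.add (by fun_prop)) (fun t ht => ?_) (fun t ht => ?_) <;> rw [interior_Icc] at ht
    · refine ((hf' t ht).fun_add ((hasDerivAt_pow 2 t).const_mul K |>.div_const 2)).congr_deriv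
        ?_ |>.hasDerivWithinAt
      push_cast
      ring
    · linarith [hbound t ht]
  have h01 := hmono (left_mem_Icc.2 zero_le_one) (right_mem_Icc.2 zero_le_one) zero_le_one
  norm_num at h01
  linarith

namespace Matrix

section L2OpNorm

variable {𝕜 : Type*} [RCLike 𝕜] {n : Type*} [Fintype n] [DecidableEq n]

theorem l2_opNorm_one_le : ‖(1 : Matrix n n 𝕜)‖ ≤ 1 := by
  rw [cstar_norm_def, map_one]
  exact ContinuousLinearMap.norm_id_le

theorem isUnit_det_one_add_of_l2_opNorm_lt_one {M : Matrix n n 𝕜} (hM : ‖M‖ < 1) :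
    IsUnit (1 + M).det := by
  rw [← isUnit_iff_isUnit_det, ← sub_neg_eq_add]
  exact isUnit_one_sub_of_norm_lt_one (by rwa [norm_neg])

theorem l2_opNorm_inv_one_add_le {M : Matrix n n 𝕜} (hM : ‖M‖ < 1) :
    ‖(1 + M)⁻¹‖ ≤ (1 - ‖M‖)⁻¹ := by
  rw [nonsing_inv_eq_ringInverse, ← sub_neg_eq_add, ← norm_neg M]
  exact norm_inverse_one_sub_le l2_opNorm_one_le (by rwa [norm_neg])

end L2OpNorm

theorem sum_sq_mulVec_le {m n : Type*} [Fintype m] [Fintype n] [DecidableEq n]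
    (C : Matrix m n ℝ) (x : n → ℝ) : ∑ i, (C *ᵥ x) i ^ 2 ≤ ‖C‖ ^ 2 * ∑ i, x i ^ 2 := by
  have h := pow_le_pow_left₀ (norm_nonneg _) (C.l2_opNorm_mulVec (WithLp.toLp 2 x)) 2
  simpa [mul_pow, EuclideanSpace.norm_sq_eq] using h

section Deriv

variable {𝕜 : Type*} [NontriviallyNormedField 𝕜] {n : Type*} [Fintype n] [DecidableEq n]

theorem hasDerivAt_det_one_add_smul_zero (M : Matrix n n 𝕜) :
    HasDerivAt (fun r : 𝕜 => (1 + r • M).det) M.trace 0 := by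
  rw [funext fun r : 𝕜 => det_one_add_smul r M]
  set p := (det (1 + (Polynomial.X : Polynomial 𝕜) • M.map Polynomial.C)).divX.divX
  refine (((hasDerivAt_id' (0 : 𝕜)).const_mul M.trace).const_add 1 |>.fun_add
    ((p.hasDerivAt 0).fun_mul (hasDerivAt_pow 2 0))).congr_deriv ?_
  simp

theorem hasDerivAt_det_one_add_smul (M : Matrix n n 𝕜) (t : 𝕜) (ht : IsUnit (1 + t • M).det) :
    HasDerivAt (fun s : 𝕜 => (1 + s • M).det)
      ((1 + t • M).det * ((1 + t • M)⁻¹ * M).trace) t := by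
  set C := 1 + t • M
  have hC : ∀ s : 𝕜, 1 + s • M = C * (1 + (s - t) • (C⁻¹ * M)) := fun s => by
    rw [mul_add, mul_one, Matrix.mul_smul, ← mul_assoc, mul_nonsing_inv _ ht, one_mul]
    module
  simp_rw [hC, det_mul]
  have h₀ : HasDerivAt (fun r : 𝕜 => (1 + r • (C⁻¹ * M)).det) (C⁻¹ * M).trace (t - t) := by
    rw [sub_self]
    exact hasDerivAt_det_one_add_smul_zero _
  exact (h₀.comp_sub_const t t).const_mul C.det

end Deriv

theorem hasDerivAt_log_det_one_add_smul {n : Type*} [Fintype n] [DecidableEq n]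
    (M : Matrix n n ℝ) (t : ℝ) (ht : IsUnit (1 + t • M).det) :
    HasDerivAt (fun s => Real.log (1 + s • M).det) ((1 + t • M)⁻¹ * M).trace t := by
  have h := (hasDerivAt_det_one_add_smul M t ht).log ht.ne_zero
  rwa [mul_div_cancel_left₀ _ ht.ne_zero] at h

theorem trace_sub_trace_inv_one_add_smul_mul {R : Type*} [CommRing R] {n : Type*} [Fintype n]
    [DecidableEq n] (M : Matrix n n R) (t : R) (ht : IsUnit (1 + t • M).det) :
    M.trace - ((1 + t • M)⁻¹ * M).trace = t * ((1 + t • M)⁻¹ * M * M).trace := by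
  have hM : (1 + t • M)⁻¹ * ((1 + t • M) * M) = M := by
    rw [← mul_assoc, nonsing_inv_mul _ ht, one_mul]
  have h : M - (1 + t • M)⁻¹ * M = t • ((1 + t • M)⁻¹ * M * M) := by
    nth_rewrite 1 [← hM]
    rw [← mul_sub, add_mul, one_mul, add_sub_cancel_left, smul_mul, Matrix.mul_smul, mul_assoc]
  rw [← trace_sub, h, trace_smul, smul_eq_mul]

end Matrix

section FinMatrix

variable {d : ℕ}

theorem matOpNorm_eq_norm (A : Matrix (Fin d) (Fin d) ℝ) : matOpNorm A = ‖A‖ := rfl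

theorem matFrobNorm_nonneg (A : Matrix (Fin d) (Fin d) ℝ) : 0 ≤ matFrobNorm A :=
  Real.sqrt_nonneg _

theorem matFrobNorm_sq (A : Matrix (Fin d) (Fin d) ℝ) :
    matFrobNorm A ^ 2 = ∑ i, ∑ j, A i j ^ 2 :=
  Real.sq_sqrt (by positivity)

theorem trace_mul_le_matFrobNorm_mul (X Y : Matrix (Fin d) (Fin d) ℝ) :
    (X * Y).trace ≤ matFrobNorm X * matFrobNorm Y := by
  have h := Real.sum_mul_le_sqrt_mul_sqrt Finset.univ (fun p : Fin d × Fin d => X p.1 p.2)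
    (fun p => Y p.2 p.1)
  rw [Fintype.sum_prod_type, Fintype.sum_prod_type, Fintype.sum_prod_type,
    Finset.sum_comm (f := fun i j => Y j i ^ 2)] at h
  simpa [trace, mul_apply, matFrobNorm] using h

theorem matFrobNorm_mul_le (C B : Matrix (Fin d) (Fin d) ℝ) :
    matFrobNorm (C * B) ≤ ‖C‖ * matFrobNorm B := by
  refine (pow_le_pow_iff_left₀ (matFrobNorm_nonneg _)
    (mul_nonneg (norm_nonneg C) (matFrobNorm_nonneg B)) two_ne_zero).1 ?_
  rw [mul_pow, matFrobNorm_sq, matFrobNorm_sq, Finset.sum_comm,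
    Finset.sum_comm (f := fun i j => B i j ^ 2), Finset.mul_sum]
  refine Finset.sum_le_sum fun j _ => ?_
  simpa [mulVec, dotProduct, mul_apply] using C.sum_sq_mulVec_le (fun i => B i j)

theorem trace_mul_mul_self_le (C B : Matrix (Fin d) (Fin d) ℝ) :
    (C * B * B).trace ≤ ‖C‖ * matFrobNorm B ^ 2 :=
  calc (C * B * B).trace ≤ matFrobNorm (C * B) * matFrobNorm B :=
        trace_mul_le_matFrobNorm_mul _ _
    _ ≤ ‖C‖ * matFrobNorm B * matFrobNorm B := by
      gcongr
      exacts [matFrobNorm_nonneg B, matFrobNorm_mul_le C B]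
    _ = ‖C‖ * matFrobNorm B ^ 2 := by ring

theorem trace_sub_trace_inv_one_add_smul_mul_le (B : Matrix (Fin d) (Fin d) ℝ) (hB : ‖B‖ < 1)
    {t : ℝ} (ht : t ∈ Icc (0 : ℝ) 1) :
    B.trace - ((1 + t • B)⁻¹ * B).trace ≤ t * (matFrobNorm B ^ 2 / (1 - ‖B‖)) := by
  have htB : ‖t • B‖ ≤ ‖B‖ := norm_smul_le_of_mem_Icc ht B
  rw [trace_sub_trace_inv_one_add_smul_mul B t
    (isUnit_det_one_add_of_l2_opNorm_lt_one (htB.trans_lt hB))]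
  refine mul_le_mul_of_nonneg_left ?_ ht.1
  calc ((1 + t • B)⁻¹ * B * B).trace ≤ ‖(1 + t • B)⁻¹‖ * matFrobNorm B ^ 2 :=
        trace_mul_mul_self_le _ _
    _ ≤ (1 - ‖t • B‖)⁻¹ * matFrobNorm B ^ 2 := by
      gcongr
      exact l2_opNorm_inv_one_add_le (htB.trans_lt hB)
    _ ≤ (1 - ‖B‖)⁻¹ * matFrobNorm B ^ 2 := by gcongr
    _ = matFrobNorm B ^ 2 / (1 - ‖B‖) := by rw [div_eq_inv_mul]

end FinMatrix

/-- Rump's estimate: if `‖A - I‖_op < 1` then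
`Tr(A - I) - log (det A) ≤ ‖A - I‖_F² / (2 (1 - ‖A - I‖_op))`, and `det A > 0`. -/
theorem trace_sub_log_det_le {d : ℕ} (A : Matrix (Fin d) (Fin d) ℝ)
    (hA : matOpNorm (A - 1) < 1) :
    (A - 1).trace - Real.log A.det ≤
        matFrobNorm (A - 1) ^ 2 / (2 * (1 - matOpNorm (A - 1))) ∧
      0 < A.det := by
  rw [matOpNorm_eq_norm] at hA ⊢
  set B := A - 1
  have hA_eq : A = 1 + (1 : ℝ) • B := by simp [B]
  have hunit : ∀ t ∈ Icc (0 : ℝ) 1, IsUnit (1 + t • B).det := fun t ht =>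
    isUnit_det_one_add_of_l2_opNorm_lt_one ((norm_smul_le_of_mem_Icc ht B).trans_lt hA)
  have hcont : Continuous fun t : ℝ => (1 + t • B).det := by fun_prop
  have hφ := sub_div_two_le_of_hasDerivAt_ge_neg_mul
    (f := fun t => Real.log (1 + t • B).det - t * B.trace) (K := matFrobNorm B ^ 2 / (1 - ‖B‖))
    ((hcont.continuousOn.log fun t ht => (hunit t ht).ne_zero).sub (by fun_prop))
    (fun t ht => (hasDerivAt_log_det_one_add_smul B t (hunit t (Ioo_subset_Icc_self ht))).sub
      (hasDerivAt_mul_const B.trace))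
    (fun t ht => by
      linarith [trace_sub_trace_inv_one_add_smul_mul_le B hA (Ioo_subset_Icc_self ht)])
  rw [hA_eq]
  refine ⟨?_, pos_of_continuousOn_Icc_ne_zero hcont.continuousOn
    (fun t ht => (hunit t ht).ne_zero) (by simp)⟩
  simp only [zero_smul, add_zero, det_one, Real.log_one, zero_mul, sub_zero, one_mul] at hφ
  rw [div_mul_eq_div_div_swap]
  linarith
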